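/- arXiv:math/0610546 — 3 statements merged into one kernel-verified Lean document; each statement's English description precedes it below -/
import Mathlib

section
/- For every natural number L, the sum over j from -L to 2L of (-1)^j * q^(j(3j+1)/2 + j) * [2L-j choose L+j]_q equals q^L. -/
open Finset

/-- The indeterminate `q`, as an element of the field of rational functions over `ℚ`. -/
noncomputable def q : RatFunc ℚ := RatFunc.X

/-- The Gaussian (q-)binomial coefficient `[n choose k]_t` with base `t`,
defined as `(1-t^(n-k+1))⋯(1-t^n) / ((1-t)⋯(1-t^k))` for `0 ≤ k ≤ n` and `0` otherwise. -/
noncomputable def qb (t : RatFunc ℚ) (n k : ℤ) : RatFunc ℚ :=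
  if 0 ≤ k ∧ k ≤ n then
    (∏ i ∈ Finset.range k.toNat, (1 - t ^ (n - (i : ℤ)))) /
      (∏ i ∈ Finset.range k.toNat, (1 - t ^ ((i : ℤ) + 1)))
  else 0

lemma q_ne_zero : q ≠ 0 := RatFunc.X_ne_zero

lemma q_pow_ne_one (n : ℕ) (hn : n ≠ 0) : q ^ n ≠ 1 := by
  intro h
  have h2 : (algebraMap (Polynomial ℚ) (RatFunc ℚ)) (Polynomial.X ^ n)
      = algebraMap (Polynomial ℚ) (RatFunc ℚ) 1 := by
    simpa [map_pow, RatFunc.algebraMap_X, q] using h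
  have h3 := RatFunc.algebraMap_injective ℚ h2
  have h4 := congrArg (Polynomial.eval (0:ℚ)) h3
  simp [zero_pow hn] at h4

lemma q_zpow_ne_one (m : ℤ) (hm : m ≠ 0) : q ^ m ≠ 1 := by
  rcases m with n | n
  · simpa using q_pow_ne_one n (by simpa using hm)
  · rw [Int.negSucc_eq, zpow_neg]
    rw [ne_eq, inv_eq_one]
    exact_mod_cast q_pow_ne_one (n+1) (by omega)

lemma one_sub_q_zpow_ne (m : ℤ) (hm : m ≠ 0) : (1 : RatFunc ℚ) - q ^ m ≠ 0 :=
  sub_ne_zero.mpr (Ne.symm (q_zpow_ne_one m hm))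

/-- numerator-type product -/
noncomputable def NP (n : ℤ) (k : ℕ) : RatFunc ℚ := ∏ i ∈ Finset.range k, (1 - q ^ (n - (i : ℤ)))
/-- denominator-type product -/
noncomputable def DP (k : ℕ) : RatFunc ℚ := ∏ i ∈ Finset.range k, (1 - q ^ ((i : ℤ) + 1))

lemma DP_ne_zero (k : ℕ) : DP k ≠ 0 := by
  refine Finset.prod_ne_zero_iff.mpr fun i _ => one_sub_q_zpow_ne _ (by omega)

lemma NP_ne_zero (n : ℤ) (k : ℕ) (h : (k : ℤ) ≤ n) : NP n k ≠ 0 := by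
  refine Finset.prod_ne_zero_iff.mpr fun i hi => one_sub_q_zpow_ne _ ?_
  simp only [Finset.mem_range] at hi
  omega

lemma qb_eq (n k : ℤ) (h0 : 0 ≤ k) (h1 : k ≤ n) : qb q n k = NP n k.toNat / DP k.toNat := by
  rw [qb, if_pos ⟨h0, h1⟩]; rfl

lemma qb_of_gt {t : RatFunc ℚ} {n k : ℤ} (h : n < k) : qb t n k = 0 := by
  rw [qb, if_neg]; rintro ⟨_, h2⟩; omega

lemma qb_of_neg {t : RatFunc ℚ} {n k : ℤ} (h : k < 0) : qb t n k = 0 := by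
  rw [qb, if_neg]; rintro ⟨h1, _⟩; omega

lemma qb_zero_right {t : RatFunc ℚ} {n : ℤ} (h : 0 ≤ n) : qb t n 0 = 1 := by
  rw [qb, if_pos ⟨le_refl 0, h⟩]; simp

lemma NP_succ (n : ℤ) (k : ℕ) : NP n (k+1) = NP n k * (1 - q ^ (n - (k:ℤ))) :=
  Finset.prod_range_succ _ _

lemma NP_succ' (n : ℤ) (k : ℕ) : NP n (k+1) = (1 - q ^ n) * NP (n-1) k := by
  rw [NP, Finset.prod_range_succ']
  have h1 : (∏ i ∈ Finset.range k, (1 - q ^ (n - ((i:ℕ)+1 : ℕ)))) = NP (n-1) k := by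
    refine Finset.prod_congr rfl fun i _ => ?_
    congr 1
    push_cast
    ring
  rw [h1]
  norm_num [mul_comm]

lemma DP_succ (k : ℕ) : DP (k+1) = DP k * (1 - q ^ ((k:ℤ)+1)) :=
  Finset.prod_range_succ _ _

lemma qb_self {n : ℤ} (h : 0 ≤ n) : qb q n n = 1 := by
  rw [qb_eq n n h le_rfl]
  have key : NP n n.toNat = DP n.toNat := by
    rw [NP, ← Finset.prod_range_reflect]
    refine Finset.prod_congr rfl fun i hi => ?_
    simp only [Finset.mem_range] at hi
    have he : n - ((n.toNat - 1 - i : ℕ) : ℤ) = (i:ℤ) + 1 := by omega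
    rw [he]
  rw [key, div_self (DP_ne_zero _)]

lemma pascal1 (n k : ℤ) (h : 1 ≤ n ∨ k < 0 ∨ 1 ≤ k) :
    qb q n k = qb q (n-1) (k-1) + q ^ k * qb q (n-1) k := by
  rcases lt_or_ge k 0 with hk | hk
  · rw [qb_of_neg hk, qb_of_neg (by omega), qb_of_neg hk]; ring
  rcases lt_or_ge n k with hnk | hnk
  · rw [qb_of_gt hnk, qb_of_gt (by omega), qb_of_gt (by omega)]; ring
  -- now 0 ≤ k ≤ n, and (1 ≤ n or 1 ≤ k); in fact n ≥ 1 unless n=k=0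
  rcases eq_or_lt_of_le hk with hk0 | hk1
  · -- k = 0
    have hn : (0:ℤ) ≤ n - 1 := by omega
    rw [← hk0, qb_zero_right (by omega), qb_of_neg (by omega), qb_zero_right hn]
    simp
  rcases eq_or_lt_of_le hnk with hkn | hkn
  · -- k = n
    rw [hkn] at *
    rw [qb_self (by omega), qb_self (by omega), qb_of_gt (by omega)]
    ring
  -- main case : 1 ≤ k ≤ n - 1
  obtain ⟨m, rfl⟩ : ∃ m : ℕ, k = (m : ℤ) := ⟨k.toNat, by omega⟩
  obtain ⟨mm, rfl⟩ : ∃ mm : ℕ, m = mm + 1 := ⟨m - 1, by omega⟩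
  rw [qb_eq _ _ hk hnk, qb_eq _ _ (by omega) (by omega), qb_eq _ _ (by omega) (by omega)]
  have e1 : ((mm:ℤ) + 1 : ℤ).toNat = mm + 1 := by omega
  have e2 : (((mm:ℕ) + 1 : ℕ) : ℤ) - 1 = (mm : ℤ) := by push_cast; ring
  have e3 : ((mm : ℤ)).toNat = mm := by omega
  rw [show (((mm:ℕ) + 1 : ℕ) : ℤ) = (mm:ℤ) + 1 by push_cast; ring] at *
  rw [e1, e2, e3]
  rw [NP_succ' n mm, NP_succ (n-1) mm, DP_succ mm]
  have hq1 : (1 : RatFunc ℚ) - q ^ ((mm:ℤ)+1) ≠ 0 := one_sub_q_zpow_ne _ (by omega)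
  have hd : DP mm ≠ 0 := DP_ne_zero mm
  have hsplit : q ^ n = q ^ ((mm:ℤ)+1) * q ^ (n - 1 - (mm:ℤ)) := by
    rw [← zpow_add₀ q_ne_zero]; congr 1; ring
  have hexp : n - 1 - (mm:ℤ) = n - 1 - (mm:ℤ) := rfl
  rw [hsplit]
  field_simp
  ring
lemma pascal2 (n k : ℤ) (h : 1 ≤ n ∨ k < 0 ∨ 1 ≤ k) :
    qb q n k = q ^ (n - k) * qb q (n-1) (k-1) + qb q (n-1) k := by
  rcases lt_or_ge k 0 with hk | hk
  · rw [qb_of_neg hk, qb_of_neg (by omega), qb_of_neg hk]; ring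
  rcases lt_or_ge n k with hnk | hnk
  · rw [qb_of_gt hnk, qb_of_gt (by omega), qb_of_gt (by omega)]; ring
  rcases eq_or_lt_of_le hk with hk0 | hk1
  · have hn : (0:ℤ) ≤ n - 1 := by omega
    rw [← hk0, qb_zero_right (by omega), qb_of_neg (by omega), qb_zero_right hn]
    ring
  rcases eq_or_lt_of_le hnk with hkn | hkn
  · rw [hkn] at *
    rw [qb_self (by omega), qb_self (by omega), qb_of_gt (by omega)]
    simp
  obtain ⟨m, rfl⟩ : ∃ m : ℕ, k = (m : ℤ) := ⟨k.toNat, by omega⟩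
  obtain ⟨mm, rfl⟩ : ∃ mm : ℕ, m = mm + 1 := ⟨m - 1, by omega⟩
  rw [qb_eq _ _ hk hnk, qb_eq _ _ (by omega) (by omega), qb_eq _ _ (by omega) (by omega)]
  have e1 : ((mm:ℤ) + 1 : ℤ).toNat = mm + 1 := by omega
  have e2 : (((mm:ℕ) + 1 : ℕ) : ℤ) - 1 = (mm : ℤ) := by push_cast; ring
  have e3 : ((mm : ℤ)).toNat = mm := by omega
  rw [show (((mm:ℕ) + 1 : ℕ) : ℤ) = (mm:ℤ) + 1 by push_cast; ring] at *
  rw [e1, e2, e3]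
  rw [NP_succ' n mm, NP_succ (n-1) mm, DP_succ mm]
  have hq1 : (1 : RatFunc ℚ) - q ^ ((mm:ℤ)+1) ≠ 0 := one_sub_q_zpow_ne _ (by omega)
  have hd : DP mm ≠ 0 := DP_ne_zero mm
  have hsplit : q ^ n = q ^ ((mm:ℤ)+1) * q ^ (n - 1 - (mm:ℤ)) := by
    rw [← zpow_add₀ q_ne_zero]; congr 1; ring
  have hsplit2 : q ^ (n - ((mm:ℤ)+1)) = q ^ (n - 1 - (mm:ℤ)) := by congr 1; ring
  rw [hsplit, hsplit2]
  field_simp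
  ring

/-- The general summand. -/
noncomputable def term (a b c j : ℤ) : RatFunc ℚ :=
  (-1 : RatFunc ℚ) ^ j * q ^ (j * (3 * j + 1) / 2 + c * j) * qb q (a - j) (b + j)

/-- The general sum `S a b c = Σ_j (-1)^j q^(j(3j+1)/2+cj) [a-j, b+j]`. -/
noncomputable def S (a b c : ℤ) : RatFunc ℚ := ∑ j ∈ Finset.Icc (-b) (a - b), term a b c j

lemma two_dvd_E (j : ℤ) : 2 * (j * (3 * j + 1) / 2) = j * (3 * j + 1) := by
  apply Int.two_mul_ediv_two_of_even
  have h1 : j * (3 * j + 1) = j * (j + 1) + 2 * (j * j) := by ring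
  rw [h1]
  exact (Int.even_mul_succ_self j).add (even_two_mul _)

lemma E_shift (j : ℤ) : (j - 1) * (3 * (j - 1) + 1) / 2 = j * (3 * j + 1) / 2 - 3 * j + 1 := by
  have h1 := two_dvd_E j
  have h2 := two_dvd_E (j - 1)
  have h3 : (j - 1) * (3 * (j - 1) + 1) = j * (3 * j + 1) - 6 * j + 2 := by ring
  omega

lemma neg_one_zpow_sub_one (j : ℤ) :
    (-1 : RatFunc ℚ) ^ (j - 1) = -(-1 : RatFunc ℚ) ^ j := by
  rw [zpow_sub₀ (by norm_num : (-1 : RatFunc ℚ) ≠ 0)]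
  rw [zpow_one, div_neg, div_one]

lemma term_eq_zero_left {a b c j : ℤ} (h : b + j < 0) : term a b c j = 0 := by
  rw [term, qb_of_neg h, mul_zero]

lemma term_eq_zero_right {a b c j : ℤ} (h : a - b < j) (h2 : -1 ≤ a - b) :
    term a b c j = 0 := by
  rw [term, qb_of_gt (by omega), mul_zero]

lemma sum_eq_S (a b c lo hi : ℤ) (hlo : lo ≤ -b) (hhi : a - b ≤ hi) (hab : -1 ≤ a - b) :
    ∑ j ∈ Finset.Icc lo hi, term a b c j = S a b c := by
  rw [S]
  symm
  apply Finset.sum_subset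
  · intro x hx
    simp only [Finset.mem_Icc] at *
    omega
  · intro x hx hx2
    simp only [Finset.mem_Icc] at *
    rcases lt_or_ge (b + x) 0 with h | h
    · exact term_eq_zero_left h
    · exact term_eq_zero_right (by omega) hab

lemma Icc_top_split (lo hi : ℤ) (h : lo ≤ hi) :
    Finset.Icc lo hi = insert hi (Finset.Icc lo (hi - 1)) := by
  ext x
  simp only [Finset.mem_Icc, Finset.mem_insert]
  omega

lemma sum_Icc_top (lo hi : ℤ) (h : lo ≤ hi) (f : ℤ → RatFunc ℚ) :
    ∑ j ∈ Finset.Icc lo hi, f j = (∑ j ∈ Finset.Icc lo (hi - 1), f j) + f hi := by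
  rw [Icc_top_split lo hi h, Finset.sum_insert (by simp)]
  ring

/-- `q`-Pascal (first form) at the level of sums. -/
lemma SP1 (a b c : ℤ) (ha : 1 ≤ a) (hab : b ≤ a) (hba : 1 ≤ a + b) :
    S a b c = S (a-1) (b-1) c + q ^ b * S (a-1) b (c+1) := by
  have hterm : ∀ j ∈ Finset.Icc (-b) (a - b),
      term a b c j = term (a-1) (b-1) c j + q ^ b * term (a-1) b (c+1) j := by
    intro j hj
    simp only [Finset.mem_Icc] at hj
    rw [term, pascal1 (a - j) (b + j) (by omega)]
    rw [term, term]
    have e1 : a - j - 1 = (a - 1) - j := by ring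
    have e2 : b + j - 1 = (b - 1) + j := by ring
    have e3 : q ^ (j * (3*j+1)/2 + c*j) * q ^ (b + j)
        = q ^ b * q ^ (j * (3*j+1)/2 + (c+1)*j) := by
      rw [← zpow_add₀ q_ne_zero, ← zpow_add₀ q_ne_zero]
      congr 1; ring
    rw [e1, e2]
    calc (-1:RatFunc ℚ)^j * q ^ (j * (3*j+1)/2 + c*j) *
          (qb q (a-1-j) (b-1+j) + q ^ (b+j) * qb q (a-1-j) (b+j))
        = (-1:RatFunc ℚ)^j * q ^ (j * (3*j+1)/2 + c*j) * qb q (a-1-j) (b-1+j)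
          + (-1:RatFunc ℚ)^j * (q ^ (j * (3*j+1)/2 + c*j) * q ^ (b+j)) * qb q (a-1-j) (b+j) := by
          ring
      _ = _ := by rw [e3]; ring
  rw [S, Finset.sum_congr rfl hterm, Finset.sum_add_distrib, ← Finset.mul_sum]
  congr 1
  · exact sum_eq_S _ _ _ _ _ (by omega) (by omega) (by omega)
  · congr 1
    exact sum_eq_S _ _ _ _ _ (by omega) (by omega) (by omega)

/-- `q`-Pascal (second form) at the level of sums. -/
lemma SP2 (a b c : ℤ) (ha : 1 ≤ a) (hab : b ≤ a) (hba : 1 ≤ a + b) :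
    S a b c = q ^ (a - b) * S (a-1) (b-1) (c-2) + S (a-1) b c := by
  have hterm : ∀ j ∈ Finset.Icc (-b) (a - b),
      term a b c j = q ^ (a - b) * term (a-1) (b-1) (c-2) j + term (a-1) b c j := by
    intro j hj
    simp only [Finset.mem_Icc] at hj
    rw [term, pascal2 (a - j) (b + j) (by omega)]
    rw [term, term]
    have e1 : a - j - 1 = (a - 1) - j := by ring
    have e2 : b + j - 1 = (b - 1) + j := by ring
    have e3 : q ^ (j * (3*j+1)/2 + c*j) * q ^ (a - j - (b + j))
        = q ^ (a - b) * q ^ (j * (3*j+1)/2 + (c-2)*j) := by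
      rw [← zpow_add₀ q_ne_zero, ← zpow_add₀ q_ne_zero]
      congr 1; ring
    rw [e1, e2]
    calc (-1:RatFunc ℚ)^j * q ^ (j * (3*j+1)/2 + c*j) *
          (q ^ (a - j - (b+j)) * qb q (a-1-j) (b-1+j) + qb q (a-1-j) (b+j))
        = (-1:RatFunc ℚ)^j * (q ^ (j * (3*j+1)/2 + c*j) * q ^ (a - j - (b+j))) * qb q (a-1-j) (b-1+j)
          + (-1:RatFunc ℚ)^j * q ^ (j * (3*j+1)/2 + c*j) * qb q (a-1-j) (b+j) := by
          ring
      _ = _ := by rw [e3]; ring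
  rw [S, Finset.sum_congr rfl hterm, Finset.sum_add_distrib, ← Finset.mul_sum]
  congr 1
  · congr 1
    exact sum_eq_S _ _ _ _ _ (by omega) (by omega) (by omega)
  · exact sum_eq_S _ _ _ _ _ (by omega) (by omega) (by omega)

/-- Index-shift identity. -/
lemma SSH (a b c : ℤ) (ha : 0 ≤ a) (hab : b < a) :
    S a b c = -q ^ (c+2) * S (a-1) (b+1) (c+3) := by
  have hterm : ∀ j : ℤ, term (a-1) (b+1) (c+3) (j-1) = -q ^ (-(c+2)) * term a b c j := by
    intro j
    rw [term, term]
    have e1 : a - 1 - (j - 1) = a - j := by ring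
    have e2 : b + 1 + (j - 1) = b + j := by ring
    have e3 : q ^ ((j-1) * (3*(j-1)+1)/2 + (c+3)*(j-1))
        = q ^ (-(c+2)) * q ^ (j * (3*j+1)/2 + c*j) := by
      rw [← zpow_add₀ q_ne_zero]
      congr 1
      have := E_shift j
      have h2 : (j-1) * (3*(j-1)+1)/2 + (c+3)*(j-1)
          = (j * (3*j+1)/2 - 3*j + 1) + (c+3)*(j-1) := by rw [this]
      rw [h2]; ring
    rw [e1, e2, e3, neg_one_zpow_sub_one]
    ring
  have hrange : S (a-1) (b+1) (c+3)
      = ∑ j ∈ Finset.Icc (-b) (a-b-1), term (a-1) (b+1) (c+3) (j - 1) := by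
    rw [S]
    have hmap : Finset.Icc (-(b+1)) (a-1-(b+1))
        = (Finset.Icc (-b) (a-b-1)).map (addRightEmbedding (-1)) := by
      rw [Finset.map_add_right_Icc]
      congr 1 <;> ring
    rw [hmap, Finset.sum_map]
    refine Finset.sum_congr rfl fun j _ => ?_
    simp only [addRightEmbedding_apply, sub_eq_add_neg]
  have hS : S a b c = ∑ j ∈ Finset.Icc (-b) (a-b-1), term a b c j := by
    rw [S, sum_Icc_top _ _ (by omega)]
    have hz : term a b c (a - b) = 0 := by
      rw [term, qb_of_gt (by omega), mul_zero]
    rw [hz, add_zero]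
  rw [hrange, Finset.sum_congr rfl (fun j _ => hterm j), ← Finset.mul_sum, ← hS]
  rw [← mul_assoc]
  rw [show -q ^ (c+2) * -q ^ (-(c+2)) = q ^ ((c+2) + (-(c+2))) by
    rw [neg_mul_neg, ← zpow_add₀ q_ne_zero]]
  rw [show (c+2) + (-(c+2)) = (0:ℤ) by ring, zpow_zero, one_mul]

lemma R0 (b c : ℤ) (hb : 1 ≤ b) :
    S (2*b) b c = S (2*b-1) (b-1) c + q^(2*b-1) * S (2*b-2) (b-1) (c-1)
      - q^(b-c) * S (2*b-1) (b-1) (c-2) := by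
  have h1 := SP1 (2*b) b c (by omega) (by omega) (by omega)
  have h2 := SP2 (2*b-1) b (c+1) (by omega) (by omega) (by omega)
  simp only [show (2*b-1-1 : ℤ) = 2*b-2 from by ring, show (c+1-2 : ℤ) = c-1 from by ring,
    show (2*b-1-b : ℤ) = b-1 from by ring] at h2
  have h3 := SSH (2*b-1) (b-1) (c-2) (by omega) (by omega)
  simp only [show (c-2+2 : ℤ) = c from by ring, show (2*b-1-1 : ℤ) = 2*b-2 from by ring,
    show (b-1+1 : ℤ) = b from by ring, show (c-2+3 : ℤ) = c+1 from by ring] at h3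
  have hq : (q:RatFunc ℚ)^c ≠ 0 := zpow_ne_zero _ q_ne_zero
  have h3' : S (2*b-2) b (c+1) = -q^(-c) * S (2*b-1) (b-1) (c-2) := by
    rw [h3, zpow_neg]
    field_simp
  rw [h1, h2, h3']
  have e1 : (q:RatFunc ℚ)^(2*b-1) = q^b * q^(b-1) := by
    rw [← zpow_add₀ q_ne_zero]; congr 1; ring
  have e2 : (q:RatFunc ℚ)^(b-c) = q^b * q^(-c) := by
    rw [← zpow_add₀ q_ne_zero]; congr 1; try ring
  rw [e1, e2]
  ring

lemma D2 (b c : ℤ) (hb : 1 ≤ b) :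
    S (2*b) (b-1) c = S (2*b-1) (b-1) c - q^(b+c+1) * S (2*b-2) (b-1) (c+1) := by
  have h1 := SSH (2*b) (b-1) c (by omega) (by omega)
  simp only [show (2*b-1 : ℤ) = 2*b-1 from rfl, show (b-1+1 : ℤ) = b from by ring] at h1
  have h2 := SP2 (2*b-1) b (c+3) (by omega) (by omega) (by omega)
  simp only [show (2*b-1-1 : ℤ) = 2*b-2 from by ring, show (c+3-2 : ℤ) = c+1 from by ring,
    show (2*b-1-b : ℤ) = b-1 from by ring] at h2
  have h3 := SSH (2*b-1) (b-1) c (by omega) (by omega)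
  simp only [show (2*b-1-1 : ℤ) = 2*b-2 from by ring, show (b-1+1 : ℤ) = b from by ring] at h3
  have hq : (q:RatFunc ℚ)^(c+2) ≠ 0 := zpow_ne_zero _ q_ne_zero
  have h3' : S (2*b-2) b (c+3) = -q^(-(c+2)) * S (2*b-1) (b-1) c := by
    rw [h3, zpow_neg]
    field_simp
  rw [h1, h2, h3']
  have e1 : (q:RatFunc ℚ)^(c+2) * q^(b-1) = q^(b+c+1) := by
    rw [← zpow_add₀ q_ne_zero]; congr 1; ring
  have e2 : (q:RatFunc ℚ)^(c+2) * q^(-(c+2)) = 1 := by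
    rw [← zpow_add₀ q_ne_zero, show (c+2) + -(c+2) = (0:ℤ) from by ring, zpow_zero]
  calc -q^(c+2) * (q^(b-1) * S (2*b-2) (b-1) (c+1) + -q^(-(c+2)) * S (2*b-1) (b-1) c)
      = (q^(c+2) * q^(-(c+2))) * S (2*b-1) (b-1) c
        - (q^(c+2) * q^(b-1)) * S (2*b-2) (b-1) (c+1) := by ring
    _ = _ := by rw [e1, e2]; ring

lemma R1 (b c : ℤ) (hb : 1 ≤ b) :
    S (2*b+1) b c = S (2*b-1) (b-1) c - q^(b+c+1) * S (2*b-2) (b-1) (c+1)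
      + q^b * S (2*b) b (c+1) := by
  have h1 := SP1 (2*b+1) b c (by omega) (by omega) (by omega)
  simp only [show (2*b+1-1 : ℤ) = 2*b from by ring] at h1
  rw [h1, D2 b c hb]
  try ring

lemma A3R (b : ℤ) (hb : 1 ≤ b) :
    S (2*b) b 3 = q^b * S (2*b-1) (b-1) 1 - q^(-2 : ℤ) * S (2*b-1) (b-1) 0
      + q^(b-1) * S (2*b-2) (b-1) 1 := by
  have h1 := SSH (2*b+1) (b-1) 0 (by omega) (by omega)
  simp only [show ((0:ℤ)+2 : ℤ) = 2 from by norm_num, show (2*b+1-1 : ℤ) = 2*b from by ring,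
    show (b-1+1 : ℤ) = b from by ring, show ((0:ℤ)+3 : ℤ) = 3 from by norm_num] at h1
  -- h1 : S (2b+1) (b-1) 0 = -q^2 * S (2b) b 3
  have h2 := SP2 (2*b+1) (b-1) 0 (by omega) (by omega) (by omega)
  simp only [show (2*b+1-1 : ℤ) = 2*b from by ring, show ((0:ℤ)-2 : ℤ) = -2 from by norm_num,
    show (2*b+1-(b-1) : ℤ) = b+2 from by ring, show (b-1-1 : ℤ) = b-2 from by ring] at h2
  -- h2 : S (2b+1) (b-1) 0 = q^(b+2) * S (2b) (b-2) (-2) + S (2b) (b-1) 0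
  have h3 := SSH (2*b) (b-2) (-2) (by omega) (by omega)
  simp only [show ((-2:ℤ)+2 : ℤ) = 0 from by norm_num, show (2*b-1 : ℤ) = 2*b-1 from rfl,
    show (b-2+1 : ℤ) = b-1 from by ring, show ((-2:ℤ)+3 : ℤ) = 1 from by norm_num,
    zpow_zero, neg_one_mul] at h3
  -- h3 : S (2b) (b-2) (-2) = - S (2b-1) (b-1) 1
  have h4 := D2 b 0 hb
  simp only [show ((0:ℤ)+1 : ℤ) = 1 from by norm_num, show (b+0+1 : ℤ) = b+1 from by ring] at h4
  -- h4 : S (2b) (b-1) 0 = S (2b-1) (b-1) 0 - q^(b+1) * S (2b-2) (b-1) 1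
  rw [h2, h3, h4] at h1
  -- h1 : q^(b+2) * (- S (2b-1)(b-1) 1) + (S (2b-1)(b-1) 0 - q^(b+1) S (2b-2)(b-1) 1) = -q^2 * S (2b) b 3
  have hq2 : (q:RatFunc ℚ)^(2:ℤ) ≠ 0 := zpow_ne_zero _ q_ne_zero
  have key : S (2*b) b 3 = -q^(-2:ℤ) *
      (q^(b+2) * (- S (2*b-1) (b-1) 1) + (S (2*b-1) (b-1) 0 - q^(b+1) * S (2*b-2) (b-1) 1)) := by
    rw [h1, zpow_neg]
    field_simp
    rw [mul_div_assoc, div_self q_ne_zero, mul_one]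
  rw [key]
  have e1 : -(q:RatFunc ℚ)^(-2:ℤ) * -q^(b+2) = q^b := by
    rw [neg_mul_neg, ← zpow_add₀ q_ne_zero]; congr 1; ring
  have e2 : -(q:RatFunc ℚ)^(-2:ℤ) * -q^(b+1) = q^(b-1) := by
    rw [neg_mul_neg, ← zpow_add₀ q_ne_zero]; congr 1; ring
  calc -q^(-2:ℤ) * (q^(b+2) * (- S (2*b-1) (b-1) 1)
        + (S (2*b-1) (b-1) 0 - q^(b+1) * S (2*b-2) (b-1) 1))
      = (-q^(-2:ℤ) * -q^(b+2)) * S (2*b-1) (b-1) 1 - q^(-2:ℤ) * S (2*b-1) (b-1) 0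
        + (-q^(-2:ℤ) * -q^(b+1)) * S (2*b-2) (b-1) 1 := by ring
    _ = _ := by rw [e1, e2]

section step
variable (B : ℤ) (hB : 0 ≤ B)

-- convenient power splittings
lemma pB1 : q^(B+1) = q^B * q := by
  rw [zpow_add₀ q_ne_zero, zpow_one]
lemma pB2 : q^(B+2) = q^B * q * q := by
  rw [show (B+2:ℤ) = (B+1)+1 by ring, zpow_add₀ q_ne_zero, pB1, zpow_one]
lemma pB3 : q^(B+3) = q^B * q * q * q := by
  rw [show (B+3:ℤ) = (B+2)+1 by ring, zpow_add₀ q_ne_zero, pB2, zpow_one]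
lemma pB4 : q^(B+4) = q^B * q * q * q * q := by
  rw [show (B+4:ℤ) = (B+3)+1 by ring, zpow_add₀ q_ne_zero, pB3, zpow_one]
lemma pBm1 : q^(B-1) = q^B / q := by
  rw [zpow_sub₀ q_ne_zero, zpow_one]
lemma p2B : q^(2*B) = q^B * q^B := by
  rw [show (2*B:ℤ) = B+B by ring, zpow_add₀ q_ne_zero]
lemma p2B1 : q^(2*B+1) = q^B * q^B * q := by
  rw [zpow_add₀ q_ne_zero, p2B, zpow_one]
lemma p2B2 : q^(2*B+2) = q^B * q^B * q * q := by
  rw [show (2*B+2:ℤ) = (2*B+1)+1 by ring, zpow_add₀ q_ne_zero, p2B1, zpow_one]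
lemma p2B3 : q^(2*B+3) = q^B * q^B * q * q * q := by
  rw [show (2*B+3:ℤ) = (2*B+2)+1 by ring, zpow_add₀ q_ne_zero, p2B2, zpow_one]
lemma p2Bm1 : q^(2*B-1) = q^B * q^B / q := by
  rw [show (2*B-1:ℤ) = 2*B - 1 by ring, zpow_sub₀ q_ne_zero, p2B, zpow_one]
lemma p2Bm2 : q^(2*B-2) = q^B * q^B / (q*q) := by
  rw [show (2*B-2:ℤ) = 2*B - 2 by ring, zpow_sub₀ q_ne_zero, p2B,
    show (q:RatFunc ℚ)^(2:ℤ) = q*q from by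
      rw [show ((2:ℤ)) = 1+1 by norm_num, zpow_add₀ q_ne_zero, zpow_one]]
lemma p3B : q^(3*B) = q^B * q^B * q^B := by
  rw [show (3*B:ℤ) = (2*B)+B by ring, zpow_add₀ q_ne_zero, p2B]
lemma p3B1 : q^(3*B+1) = q^B * q^B * q^B * q := by
  rw [zpow_add₀ q_ne_zero, show (3*B:ℤ) = (2*B)+B by ring, zpow_add₀ q_ne_zero, p2B, zpow_one]
lemma p3B2 : q^(3*B+2) = q^B * q^B * q^B * q * q := by
  rw [show (3*B+2:ℤ) = (3*B+1)+1 by ring, zpow_add₀ q_ne_zero, p3B1, zpow_one]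
lemma p3B4 : q^(3*B+4) = q^B * q^B * q^B * q * q * q * q := by
  rw [show (3*B+4:ℤ) = ((3*B+2)+1)+1 by ring, zpow_add₀ q_ne_zero, zpow_add₀ q_ne_zero,
    p3B2, zpow_one]
lemma p3Bm1 : q^(3*B-1) = q^B * q^B * q^B / q := by
  rw [show (3*B-1:ℤ) = (2*B)+(B-1) by ring, zpow_add₀ q_ne_zero, p2B, pBm1]
  ring
lemma pm1 : q^(-1:ℤ) = 1 / q := by
  rw [zpow_neg, zpow_one, one_div]
lemma pm2 : q^(-2:ℤ) = 1 / (q*q) := by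
  rw [zpow_neg, one_div, show ((2:ℤ)) = 1+1 by norm_num, zpow_add₀ q_ne_zero, zpow_one]

end step

section steps
variable {B : ℤ}

/-- item 2 step : `A_1(B+1) = q^(B+1)` -/
lemma step2 (hB : 0 ≤ B)
    (ih1 : S (2*B) B 0 = 1) (ih3 : S (2*B+1) B (-1) = 1)
    (ih5 : S (2*B+1) B 1 = q^B + q^(B+1) - q^(2*B+1)) :
    S (2*B+2) (B+1) 1 = q^(B+1) := by
  have h := R0 (B+1) 1 (by omega)
  simp only [show (2*(B+1) : ℤ) = 2*B+2 from by ring, show (2*B+2-1 : ℤ) = 2*B+1 from by ring,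
    show (B+1-1 : ℤ) = B from by ring, show (2*B+2-2 : ℤ) = 2*B from by ring,
    show ((1:ℤ)-1 : ℤ) = 0 from by norm_num, show ((1:ℤ)-2 : ℤ) = -1 from by norm_num] at h
  rw [h, ih5, ih1, ih3]
  try simp only [mul_one, mul_add, mul_sub, ← mul_assoc]
  try simp only [← zpow_add₀ q_ne_zero]
  try ring_nf

/-- item 1 step : `A_0(B+1) = 1` -/
lemma step1 (hB : 0 ≤ B)
    (ih4 : S (2*B+1) B 0 = 1) (ih6 : S (2*B+1) B (-2) = q^B * S (2*B) B (-1)) :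
    S (2*B+2) (B+1) 0 = 1 := by
  have h := R0 (B+1) 0 (by omega)
  simp only [show (2*(B+1) : ℤ) = 2*B+2 from by ring, show (2*B+2-1 : ℤ) = 2*B+1 from by ring,
    show (B+1-1 : ℤ) = B from by ring, show (2*B+2-2 : ℤ) = 2*B from by ring,
    show ((0:ℤ)-1 : ℤ) = -1 from by norm_num, show ((0:ℤ)-2 : ℤ) = -2 from by norm_num,
    show (B+1-0 : ℤ) = B+1 from by ring] at h
  rw [h, ih4, ih6]
  try simp only [mul_one, mul_add, mul_sub, ← mul_assoc]
  try simp only [← zpow_add₀ q_ne_zero]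
  try ring_nf

/-- item 6 step : `B_{-2}(B+1) = q^(B+1) A_{-1}(B+1)` -/
lemma step6 (hB : 0 ≤ B)
    (ih6 : S (2*B+1) B (-2) = q^B * S (2*B) B (-1)) :
    S (2*B+3) (B+1) (-2) = q^(B+1) * S (2*B+2) (B+1) (-1) := by
  have h := R1 (B+1) (-2) (by omega)
  simp only [show (2*(B+1) : ℤ) = 2*B+2 from by ring, show (2*B+2+1 : ℤ) = 2*B+3 from by ring,
    show (2*B+2-1 : ℤ) = 2*B+1 from by ring, show (B+1-1 : ℤ) = B from by ring,
    show (2*B+2-2 : ℤ) = 2*B from by ring, show ((-2:ℤ)+1 : ℤ) = -1 from by norm_num,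
    show (B+1+(-2)+1 : ℤ) = B from by ring] at h
  rw [h, ih6]
  try simp only [mul_one, mul_add, mul_sub, ← mul_assoc]
  try simp only [← zpow_add₀ q_ne_zero]
  try ring_nf

/-- item 3 step : `B_{-1}(B+1) = 1` -/
lemma step3 (hB : 0 ≤ B)
    (ih1 : S (2*B) B 0 = 1) (ih3 : S (2*B+1) B (-1) = 1)
    (new1 : S (2*B+2) (B+1) 0 = 1) :
    S (2*B+3) (B+1) (-1) = 1 := by
  have h := R1 (B+1) (-1) (by omega)
  simp only [show (2*(B+1) : ℤ) = 2*B+2 from by ring, show (2*B+2+1 : ℤ) = 2*B+3 from by ring,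
    show (2*B+2-1 : ℤ) = 2*B+1 from by ring, show (B+1-1 : ℤ) = B from by ring,
    show (2*B+2-2 : ℤ) = 2*B from by ring, show ((-1:ℤ)+1 : ℤ) = 0 from by norm_num,
    show (B+1+(-1)+1 : ℤ) = B+1 from by ring] at h
  rw [h, ih1, ih3, new1]
  try simp only [mul_one, mul_add, mul_sub, ← mul_assoc]
  try simp only [← zpow_add₀ q_ne_zero]
  try ring_nf

/-- item 4 step : `B_0(B+1) = 1` -/
lemma step4 (hB : 0 ≤ B)
    (ih2 : S (2*B) B 1 = q^B) (ih4 : S (2*B+1) B 0 = 1)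
    (new2 : S (2*B+2) (B+1) 1 = q^(B+1)) :
    S (2*B+3) (B+1) 0 = 1 := by
  have h := R1 (B+1) 0 (by omega)
  simp only [show (2*(B+1) : ℤ) = 2*B+2 from by ring, show (2*B+2+1 : ℤ) = 2*B+3 from by ring,
    show (2*B+2-1 : ℤ) = 2*B+1 from by ring, show (B+1-1 : ℤ) = B from by ring,
    show (2*B+2-2 : ℤ) = 2*B from by ring, show ((0:ℤ)+1 : ℤ) = 1 from by norm_num,
    show (B+1+0+1 : ℤ) = B+2 from by ring] at h
  rw [h, ih2, ih4, new2]
  try simp only [mul_one, mul_add, mul_sub, ← mul_assoc]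
  try simp only [← zpow_add₀ q_ne_zero]
  try ring_nf

/-- item 8 step : `A_3(B+1)` -/
lemma step8 (hB : 0 ≤ B)
    (ih2 : S (2*B) B 1 = q^B) (ih4 : S (2*B+1) B 0 = 1)
    (ih5 : S (2*B+1) B 1 = q^B + q^(B+1) - q^(2*B+1)) :
    S (2*B+2) (B+1) 3
      = q^(2*B) + q^(2*B+1) + q^(2*B+2) - q^(3*B+2) - q^(-2:ℤ) := by
  have h := A3R (B+1) (by omega)
  simp only [show (2*(B+1) : ℤ) = 2*B+2 from by ring, show (2*B+2-1 : ℤ) = 2*B+1 from by ring,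
    show (B+1-1 : ℤ) = B from by ring, show (2*B+2-2 : ℤ) = 2*B from by ring] at h
  rw [h, ih5, ih4, ih2]
  try simp only [mul_one, mul_add, mul_sub, ← mul_assoc]
  try simp only [← zpow_add₀ q_ne_zero]
  try ring_nf

/-- item 9 step : `B_2(B+1)` -/
lemma step9 (hB : 0 ≤ B)
    (ih8 : S (2*B) B 3 = q^(2*B-2) + q^(2*B-1) + q^(2*B) - q^(3*B-1) - q^(-2:ℤ))
    (ih9 : S (2*B+1) B 2 = q^(B-1) + q^B + q^(B+1) - q^(-1:ℤ) - q^(3*B+1))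
    (new8 : S (2*B+2) (B+1) 3
      = q^(2*B) + q^(2*B+1) + q^(2*B+2) - q^(3*B+2) - q^(-2:ℤ)) :
    S (2*B+3) (B+1) 2
      = q^B + q^(B+1) + q^(B+2) - q^(-1:ℤ) - q^(3*B+4) := by
  have h := R1 (B+1) 2 (by omega)
  simp only [show (2*(B+1) : ℤ) = 2*B+2 from by ring, show (2*B+2+1 : ℤ) = 2*B+3 from by ring,
    show (2*B+2-1 : ℤ) = 2*B+1 from by ring, show (B+1-1 : ℤ) = B from by ring,
    show (2*B+2-2 : ℤ) = 2*B from by ring, show ((2:ℤ)+1 : ℤ) = 3 from by norm_num,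
    show (B+1+2+1 : ℤ) = B+4 from by ring] at h
  rw [h, ih9, ih8, new8]
  try simp only [mul_one, mul_add, mul_sub, ← mul_assoc]
  try simp only [← zpow_add₀ q_ne_zero]
  try ring_nf

/-- item 7 step : `A_2(B+1)` -/
lemma step7 (hB : 0 ≤ B)
    (ih2 : S (2*B) B 1 = q^B) (ih4 : S (2*B+1) B 0 = 1)
    (ih9 : S (2*B+1) B 2 = q^(B-1) + q^B + q^(B+1) - q^(-1:ℤ) - q^(3*B+1)) :
    S (2*B+2) (B+1) 2 = q^B + q^(B+1) - q^(-1:ℤ) := by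
  have h := R0 (B+1) 2 (by omega)
  simp only [show (2*(B+1) : ℤ) = 2*B+2 from by ring, show (2*B+2-1 : ℤ) = 2*B+1 from by ring,
    show (B+1-1 : ℤ) = B from by ring, show (2*B+2-2 : ℤ) = 2*B from by ring,
    show ((2:ℤ)-1 : ℤ) = 1 from by norm_num, show ((2:ℤ)-2 : ℤ) = 0 from by norm_num,
    show (B+1-2 : ℤ) = B-1 from by ring] at h
  rw [h, ih9, ih2, ih4]
  try simp only [mul_one, mul_add, mul_sub, ← mul_assoc]
  try simp only [← zpow_add₀ q_ne_zero]
  try ring_nf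

/-- item 5 step : `B_1(B+1)` -/
lemma step5 (hB : 0 ≤ B)
    (ih5 : S (2*B+1) B 1 = q^B + q^(B+1) - q^(2*B+1))
    (ih7 : S (2*B) B 2 = q^(B-1) + q^B - q^(-1:ℤ))
    (new7 : S (2*B+2) (B+1) 2 = q^B + q^(B+1) - q^(-1:ℤ)) :
    S (2*B+3) (B+1) 1 = q^(B+1) + q^(B+2) - q^(2*B+3) := by
  have h := R1 (B+1) 1 (by omega)
  simp only [show (2*(B+1) : ℤ) = 2*B+2 from by ring, show (2*B+2+1 : ℤ) = 2*B+3 from by ring,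
    show (2*B+2-1 : ℤ) = 2*B+1 from by ring, show (B+1-1 : ℤ) = B from by ring,
    show (2*B+2-2 : ℤ) = 2*B from by ring, show ((1:ℤ)+1 : ℤ) = 2 from by norm_num,
    show (B+1+1+1 : ℤ) = B+3 from by ring] at h
  rw [h, ih5, ih7, new7]
  try simp only [mul_one, mul_add, mul_sub, ← mul_assoc]
  try simp only [← zpow_add₀ q_ne_zero]
  try ring_nf

end steps

lemma S00 (c : ℤ) : S 0 0 c = 1 := by
  rw [S, show (-(0:ℤ)) = 0 by ring, show ((0:ℤ) - 0) = 0 by ring, Finset.Icc_self,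
    Finset.sum_singleton, term]
  norm_num [qb_zero_right]

lemma S10 (c : ℤ) : S 1 0 c = 1 := by
  rw [S, show (-(0:ℤ)) = 0 by ring, show ((1:ℤ) - 0) = 1 by ring,
    sum_Icc_top 0 1 (by norm_num), show ((1:ℤ) - 1) = 0 by ring, Finset.Icc_self,
    Finset.sum_singleton]
  rw [term, term, qb_of_gt (by norm_num : (1:ℤ) - 1 < 0 + 1)]
  norm_num [qb_zero_right]

lemma main (n : ℕ) :
    S (2*(n:ℤ)) (n:ℤ) 0 = 1 ∧
    S (2*(n:ℤ)) (n:ℤ) 1 = q^(n:ℤ) ∧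
    S (2*(n:ℤ)+1) (n:ℤ) (-1) = 1 ∧
    S (2*(n:ℤ)+1) (n:ℤ) 0 = 1 ∧
    S (2*(n:ℤ)+1) (n:ℤ) 1 = q^(n:ℤ) + q^((n:ℤ)+1) - q^(2*(n:ℤ)+1) ∧
    S (2*(n:ℤ)+1) (n:ℤ) (-2) = q^(n:ℤ) * S (2*(n:ℤ)) (n:ℤ) (-1) ∧
    S (2*(n:ℤ)) (n:ℤ) 2 = q^((n:ℤ)-1) + q^(n:ℤ) - q^(-1:ℤ) ∧
    S (2*(n:ℤ)) (n:ℤ) 3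
      = q^(2*(n:ℤ)-2) + q^(2*(n:ℤ)-1) + q^(2*(n:ℤ)) - q^(3*(n:ℤ)-1) - q^(-2:ℤ) ∧
    S (2*(n:ℤ)+1) (n:ℤ) 2
      = q^((n:ℤ)-1) + q^(n:ℤ) + q^((n:ℤ)+1) - q^(-1:ℤ) - q^(3*(n:ℤ)+1) := by
  induction n with
  | zero =>
      refine ⟨?_, ?_, ?_, ?_, ?_, ?_, ?_, ?_, ?_⟩ <;>
        · norm_num [S00, S10]
          try ring
  | succ n ih =>
      obtain ⟨ih1, ih2, ih3, ih4, ih5, ih6, ih7, ih8, ih9⟩ := ih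
      have hB : (0:ℤ) ≤ (n:ℤ) := Int.natCast_nonneg n
      have n2 := step2 hB ih1 ih3 ih5
      have n1 := step1 hB ih4 ih6
      have n6 := step6 hB ih6
      have n3 := step3 hB ih1 ih3 n1
      have n4 := step4 hB ih2 ih4 n2
      have n8 := step8 hB ih2 ih4 ih5
      have n9 := step9 hB ih8 ih9 n8
      have n7 := step7 hB ih2 ih4 ih9
      have n5 := step5 hB ih5 ih7 n7
      push_cast
      simp only [show (2*((n:ℤ)+1) : ℤ) = 2*(n:ℤ)+2 from by ring,
        show (2*(n:ℤ)+2+1 : ℤ) = 2*(n:ℤ)+3 from by ring,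
        show ((n:ℤ)+1-1 : ℤ) = (n:ℤ) from by ring,
        show (2*(n:ℤ)+2-2 : ℤ) = 2*(n:ℤ) from by ring,
        show (2*(n:ℤ)+2-1 : ℤ) = 2*(n:ℤ)+1 from by ring,
        show (3*((n:ℤ)+1)-1 : ℤ) = 3*(n:ℤ)+2 from by ring,
        show (3*((n:ℤ)+1)+1 : ℤ) = 3*(n:ℤ)+4 from by ring,
        show ((n:ℤ)+1+1 : ℤ) = (n:ℤ)+2 from by ring]
      exact ⟨n1, n2, n3, n4, n5, n6, n7, n8, n9⟩

/-- `h(L,1) = q^L`. -/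
theorem stmt_1 (L : ℕ) :
    ∑ j ∈ Finset.Icc (-(L : ℤ)) (2 * L),
      (-1 : RatFunc ℚ) ^ j * q ^ (j * (3 * j + 1) / 2 + j) * qb q (2 * L - j) (L + j)
      = q ^ (L : ℤ) := by
  have h := (main L).2.1
  have heq : ∀ j ∈ Finset.Icc (-(L:ℤ)) (2 * (L:ℤ)),
      (-1 : RatFunc ℚ) ^ j * q ^ (j * (3 * j + 1) / 2 + j) * qb q (2 * L - j) (L + j)
        = term (2*(L:ℤ)) (L:ℤ) 1 j := by
    intro j _
    rw [term, one_mul]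
  rw [Finset.sum_congr rfl heq, sum_eq_S _ _ _ _ _ (le_refl _) (by omega) (by omega), h]
end

section
/- Define G(L,i,s) = Σ_{j=-L}^{2L+i} s^j q^{j(3j-1)/2 - ij} [2L+i-j choose L+j]_q. Then for all L ∈ N and all integers i with 3L+i ≥ 1, G(L,i,qs) = G(L,i-1,s) + q^L s G(L,i-2,s). -/
open Finset

/-- `G(L,i,s) = Σ_{j=-L}^{2L+i} s^j q^(j(3j-1)/2 - ij) [2L+i-j choose L+j]_q`. -/
noncomputable def G (L : ℕ) (i : ℤ) (s : RatFunc ℚ) : RatFunc ℚ :=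
  ∑ j ∈ Finset.Icc (-(L : ℤ)) (2 * L + i),
    s ^ j * q ^ (j * (3 * j - 1) / 2 - i * j) * qb q (2 * L + i - j) (L + j)

lemma one_sub_q_zpow_ne_zero {m : ℤ} (hm : 1 ≤ m) : 1 - q ^ m ≠ 0 := by
  rw [sub_ne_zero]
  intro h
  lift m to ℕ using (by omega)
  rw [zpow_natCast] at h
  have h2 : (algebraMap (Polynomial ℚ) (RatFunc ℚ)) (Polynomial.X ^ m) =
      (algebraMap (Polynomial ℚ) (RatFunc ℚ)) 1 := by
    simpa [q, RatFunc.algebraMap_X] using h.symm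
  have h3 := RatFunc.algebraMap_injective ℚ h2
  have := congrArg Polynomial.natDegree h3
  simp [Polynomial.natDegree_X_pow] at this
  omega

lemma den_ne_zero (m : ℕ) : (∏ i ∈ Finset.range m, (1 - q ^ ((i:ℤ)+1))) ≠ 0 := by
  rw [Finset.prod_ne_zero_iff]
  intro i _
  exact one_sub_q_zpow_ne_zero (by omega)

lemma qb_zero {n k : ℤ} (h : ¬(0 ≤ k ∧ k ≤ n)) : qb q n k = 0 := by
  rw [qb, if_neg h]

lemma pascal (n k : ℤ) (hn : 1 ≤ n) :
    qb q n k = qb q (n-1) k + q ^ (n - k) * qb q (n-1) (k-1) := by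
  by_cases hk : 0 ≤ k
  · by_cases hkn : k ≤ n
    · rcases eq_or_lt_of_le hk with hk0 | hk1
      · -- k = 0
        rw [← hk0]
        rw [qb, if_pos ⟨le_refl 0, by omega⟩, qb, if_pos ⟨le_refl 0, by omega⟩,
          qb_zero (by omega)]
        simp
      · -- 1 ≤ k ≤ n
        set m := k.toNat with hmdef
        have hkm : (m:ℤ) = k := by omega
        have hm1 : 1 ≤ m := by omega
        set P := ∏ i ∈ Finset.range (m-1), (1 - q ^ ((n-1) - (i:ℤ))) with hP
        set D := ∏ i ∈ Finset.range (m-1), (1 - q ^ ((i:ℤ)+1)) with hD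
        have numN : (∏ i ∈ Finset.range m, (1 - q ^ (n - (i:ℤ)))) = P * (1 - q ^ n) := by
          rw [show m = (m-1)+1 by omega, Finset.prod_range_succ', hP]
          congr 1
          · apply Finset.prod_congr rfl; intro i _
            congr 1; push_cast; ring
          · norm_num
        have denD : (∏ i ∈ Finset.range m, (1 - q ^ ((i:ℤ)+1))) = D * (1 - q ^ k) := by
          rw [show m = (m-1)+1 by omega, Finset.prod_range_succ, hD,
            show ((m-1:ℕ):ℤ) + 1 = k by omega]
        have e1 : qb q n k = P * (1 - q ^ n) / (D * (1 - q ^ k)) := by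
          rw [qb, if_pos ⟨hk, hkn⟩, ← hmdef, numN, denD]
        have e2 : qb q (n-1) (k-1) = P / D := by
          rw [qb, if_pos ⟨by omega, by omega⟩, show (k-1).toNat = m - 1 by omega]
        have e3 : qb q (n-1) k = P * (1 - q ^ (n-k)) / (D * (1 - q ^ k)) := by
          rcases eq_or_lt_of_le hkn with hke | hlt
          · rw [qb_zero (by omega), ← hke]
            simp
          · rw [qb, if_pos ⟨hk, by omega⟩, ← hmdef, denD]
            congr 1
            rw [show m = (m-1)+1 by omega, Finset.prod_range_succ, hP,
              show (n-1) - ((m-1:ℕ):ℤ) = n - k by omega]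
        rw [e1, e2, e3]
        have hDne : D ≠ 0 := den_ne_zero _
        have hkne : 1 - q ^ k ≠ 0 := one_sub_q_zpow_ne_zero hk1
        have key : q ^ (n-k) * q ^ k = q ^ n := by
          rw [← zpow_add₀ q_ne_zero]; ring_nf
        field_simp
        linear_combination P * key
    · rw [qb_zero (by omega), qb_zero (by omega), qb_zero (by omega)]; simp
  · rw [qb_zero (by omega), qb_zero (by omega), qb_zero (by omega)]; simp

/-- Recurrence (1.10): `G(L,i,qs) = G(L,i-1,s) + q^L s G(L,i-2,s)` when `3L+i ≥ 1`. -/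
theorem stmt_9 (L : ℕ) (i : ℤ) (h : 1 ≤ 3 * (L : ℤ) + i) (s : RatFunc ℚ) (hs : s ≠ 0) :
    G L i (q * s) = G L (i - 1) s + q ^ (L : ℤ) * s * G L (i - 2) s := by
  have step : ∀ j ∈ Finset.Icc (-(L:ℤ)) (2*(L:ℤ)+i),
      (q*s) ^ j * q ^ (j * (3 * j - 1) / 2 - i * j) * qb q (2 * (L:ℤ) + i - j) ((L:ℤ) + j)
      = (s ^ j * q ^ (j * (3 * j - 1) / 2 - (i-1) * j) * qb q (2 * (L:ℤ) + (i-1) - j) ((L:ℤ) + j))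
        + (q ^ (L:ℤ) * s * (s ^ (j-1) * q ^ ((j-1) * (3 * (j-1) - 1) / 2 - (i-2) * (j-1)) *
            qb q (2 * (L:ℤ) + (i-2) - (j-1)) ((L:ℤ) + (j-1)))) := by
    intro j hj
    simp only [Finset.mem_Icc] at hj
    rcases eq_or_lt_of_le hj.2 with hjb | hjb
    · -- j = 2L+i : all three qb's vanish
      rw [qb_zero (n := 2*(L:ℤ)+i-j) (by omega),
          qb_zero (n := 2*(L:ℤ)+(i-1)-j) (by omega),
          qb_zero (n := 2*(L:ℤ)+(i-2)-(j-1)) (by omega)]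
      ring
    · -- j < 2L+i : Pascal applies
      have hp := pascal (2*(L:ℤ)+i-j) ((L:ℤ)+j) (by omega)
      rw [show 2*(L:ℤ)+i-j-1 = 2*(L:ℤ)+(i-1)-j by ring,
          show (L:ℤ)+j-1 = (L:ℤ)+(j-1) by ring] at hp
      rw [show 2*(L:ℤ)+(i-2)-(j-1) = 2*(L:ℤ)+(i-1)-j by ring, hp]
      have hq1 : q^(j:ℤ) * q^(j*(3*j-1)/2 - i*j) = q^(j*(3*j-1)/2 - (i-1)*j) := by
        rw [← zpow_add₀ q_ne_zero]
        congr 1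
        have h2 : (i-1)*j = i*j - j := by ring
        rw [h2]
        generalize j*(3*j-1)/2 = A
        generalize i*j = B
        ring
      have hq2 : q^(j:ℤ) * q^(j*(3*j-1)/2 - i*j) * q^(2*(L:ℤ)+i-j-((L:ℤ)+j))
          = q^((L:ℤ)) * q^((j-1)*(3*(j-1)-1)/2 - (i-2)*(j-1)) := by
        rw [← zpow_add₀ q_ne_zero, ← zpow_add₀ q_ne_zero, ← zpow_add₀ q_ne_zero]
        congr 1
        have h1 : (j-1)*(3*(j-1)-1) = j*(3*j-1) - (6*j-4) := by ring
        have h2 : (i-2)*(j-1) = i*j - i - 2*j + 2 := by ring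
        rw [h1, h2]
        generalize j*(3*j-1) = A
        generalize i*j = B
        omega
      have hsj : s^(j-1) * s = s^j := by
        rw [← zpow_add_one₀ hs, sub_add_cancel]
      rw [mul_zpow]
      linear_combination (s^j * qb q (2*(L:ℤ)+(i-1)-j) ((L:ℤ)+j)) * hq1
        + (s^j * qb q (2*(L:ℤ)+(i-1)-j) ((L:ℤ)+(j-1))) * hq2
        - (q^((L:ℤ)) * q^((j-1)*(3*(j-1)-1)/2 - (i-2)*(j-1)) *
            qb q (2*(L:ℤ)+(i-1)-j) ((L:ℤ)+(j-1))) * hsj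
  have L1 : G L i (q*s) = ∑ j ∈ Finset.Icc (-(L:ℤ)) (2*(L:ℤ)+i),
      ((s ^ j * q ^ (j * (3 * j - 1) / 2 - (i-1) * j) * qb q (2 * (L:ℤ) + (i-1) - j) ((L:ℤ) + j))
        + (q ^ (L:ℤ) * s * (s ^ (j-1) * q ^ ((j-1) * (3 * (j-1) - 1) / 2 - (i-2) * (j-1)) *
            qb q (2 * (L:ℤ) + (i-2) - (j-1)) ((L:ℤ) + (j-1))))) := by
    rw [G]
    exact Finset.sum_congr rfl step
  rw [L1, Finset.sum_add_distrib]
  congr 1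
  · -- first sum = G L (i-1) s
    rw [G]
    rw [show Finset.Icc (-(L:ℤ)) (2*(L:ℤ)+i)
        = insert (2*(L:ℤ)+i) (Finset.Icc (-(L:ℤ)) (2*(L:ℤ)+(i-1))) by
      ext x; simp only [Finset.mem_Icc, Finset.mem_insert]; omega]
    rw [Finset.sum_insert (by simp only [Finset.mem_Icc]; omega)]
    rw [qb_zero (n := 2*(L:ℤ)+(i-1)-(2*(L:ℤ)+i)) (by omega)]
    rw [mul_zero, zero_add]
  · -- second sum = q^L s G L (i-2) s
    rw [G, Finset.mul_sum]
    rw [show Finset.Icc (-(L:ℤ)) (2*(L:ℤ)+i)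
        = (Finset.Icc (-(L:ℤ)-1) (2*(L:ℤ)+i-1)).map (addRightEmbedding 1) by
      rw [Finset.map_add_right_Icc]; congr 1 <;> ring]
    rw [Finset.sum_map]
    simp only [addRightEmbedding_apply, add_sub_cancel_right]
    rw [show Finset.Icc (-(L:ℤ)-1) (2*(L:ℤ)+i-1)
        = insert (-(L:ℤ)-1) (insert (2*(L:ℤ)+i-1) (Finset.Icc (-(L:ℤ)) (2*(L:ℤ)+(i-2)))) by
      ext x; simp only [Finset.mem_Icc, Finset.mem_insert]; omega]
    rw [Finset.sum_insert (by simp only [Finset.mem_insert, Finset.mem_Icc]; omega),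
        Finset.sum_insert (by simp only [Finset.mem_Icc]; omega)]
    rw [qb_zero (n := 2*(L:ℤ)+(i-2)-(-(L:ℤ)-1)) (by omega),
        qb_zero (n := 2*(L:ℤ)+(i-2)-(2*(L:ℤ)+i-1)) (by omega)]
    ring
end

section
/- For all k ≥ 2 and 0 ≤ j ≤ ⌊(k-1)/2⌋, the q^2-binomial coefficients satisfy [k-j-1 choose j]_{q^2} (1+q^{k-1-2j}) - (1+q^{k-1}) [k-j-2 choose j]_{q^2} - q^{k-1-2j} [k-j-2 choose j-1]_{q^2} (1+q^{k-1-2j}) = 0. -/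
open Finset

lemma q_pow_ne_one_s16 (m : ℕ) (hm : m ≠ 0) : (q : RatFunc ℚ)^m ≠ 1 := by
  intro h
  have hX : (RatFunc.X : RatFunc ℚ) ^ m = algebraMap (Polynomial ℚ) _ (Polynomial.X ^ m) := by
    simp [RatFunc.algebraMap_X]
  have h1 : algebraMap (Polynomial ℚ) (RatFunc ℚ) (Polynomial.X ^ m) = algebraMap _ _ 1 := by
    rw [← hX, map_one]; exact h
  have := RatFunc.algebraMap_injective ℚ h1
  have := congrArg Polynomial.natDegree this
  simp at this
  omega

lemma one_sub_ne (m : ℕ) (hm : m ≠ 0) : (1 : RatFunc ℚ) - q ^ m ≠ 0 := by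
  intro h
  exact q_pow_ne_one_s16 m hm (by linear_combination -h)

lemma zpow_eq (e : ℤ) (he : 0 ≤ e) : (q^2 : RatFunc ℚ) ^ e = q ^ (2 * e.toNat) := by
  conv_lhs => rw [← Int.toNat_of_nonneg he]
  rw [zpow_natCast, ← pow_mul]

lemma one_sub_z_ne (e : ℤ) (he : 1 ≤ e) : (1 : RatFunc ℚ) - (q^2) ^ e ≠ 0 := by
  rw [zpow_eq e (by omega)]
  exact one_sub_ne _ (by omega)

lemma denom_ne (m : ℕ) : (∏ i ∈ Finset.range m, (1 - (q^2 : RatFunc ℚ) ^ ((i : ℤ) + 1))) ≠ 0 := by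
  rw [Finset.prod_ne_zero_iff]
  intro i _
  exact one_sub_z_ne _ (by omega)

lemma qb_self_aux (m : ℕ) :
    (∏ i ∈ Finset.range m, (1 - (q^2 : RatFunc ℚ) ^ ((m : ℤ) - (i : ℤ)))) =
    ∏ i ∈ Finset.range m, (1 - (q^2 : RatFunc ℚ) ^ ((i : ℤ) + 1)) := by
  rw [← Finset.prod_range_reflect (fun i => 1 - (q^2 : RatFunc ℚ) ^ ((i:ℤ)+1)) m]
  apply Finset.prod_congr rfl
  intro i hi
  simp only [Finset.mem_range] at hi
  congr 2
  omega

lemma qb_self_s16 (m : ℕ) : qb (q^2) (m : ℤ) (m : ℤ) = 1 := by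
  rw [qb, if_pos ⟨by positivity, le_refl _⟩, Int.toNat_natCast, qb_self_aux,
    div_self (denom_ne m)]


/-- The key `q²`-binomial identity behind (2.12): for `k ≥ 2` and `0 ≤ j ≤ ⌊(k-1)/2⌋`,
`[k-j-1 choose j]_{q²}(1+q^(k-1-2j)) - (1+q^(k-1))[k-j-2 choose j]_{q²}
 - q^(k-1-2j)[k-j-2 choose j-1]_{q²}(1+q^(k-1-2j)) = 0`. -/
theorem stmt_16 (k j : ℕ) (hk : 2 ≤ k) (hj : j ≤ (k - 1) / 2) :
    qb (q ^ 2) ((k : ℤ) - j - 1) j * (1 + q ^ (k - 1 - 2 * j))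
      - (1 + q ^ (k - 1)) * qb (q ^ 2) ((k : ℤ) - j - 2) j
      - q ^ (k - 1 - 2 * j) * qb (q ^ 2) ((k : ℤ) - j - 2) ((j : ℤ) - 1)
          * (1 + q ^ (k - 1 - 2 * j)) = 0 := by
  have h2j : 2 * j ≤ k - 1 := by omega
  rcases Nat.eq_zero_or_pos j with rfl | hj1
  · -- j = 0
    rw [qb, qb, qb, if_pos, if_pos, if_neg]
    · simp
    · simp
    · exact ⟨by simp, by push_cast; omega⟩
    · exact ⟨by simp, by push_cast; omega⟩
  rcases Nat.lt_or_ge (2 * j) (k - 1) with hlt | hge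
  · -- generic case: 2j + 2 ≤ k
    obtain ⟨e, rfl⟩ : ∃ e, k = 2 * j + 2 + e := ⟨k - (2 * j + 2), by omega⟩
    obtain ⟨m, rfl⟩ : ∃ m, j = m + 1 := ⟨j - 1, by omega⟩
    have hn1 : ((2 * (m+1) + 2 + e : ℕ) : ℤ) - (m+1 : ℕ) - 1 = ((m + e + 2 : ℕ) : ℤ) := by
      push_cast; ring
    have hn2 : ((2 * (m+1) + 2 + e : ℕ) : ℤ) - (m+1 : ℕ) - 2 = ((m + e + 1 : ℕ) : ℤ) := by
      push_cast; ring
    rw [hn1, hn2, qb, qb, qb, if_pos, if_pos, if_pos]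
    · have ht1 : (((m+1:ℕ) : ℤ)).toNat = m + 1 := by simp
      have ht2 : (((m+1:ℕ) : ℤ) - 1).toNat = m := by push_cast; omega
      rw [ht1, ht2]
      have hA : (∏ i ∈ Finset.range (m+1), (1 - (q^2 : RatFunc ℚ) ^ (((m+e+2:ℕ):ℤ) - (i:ℤ))))
          = (1 - q ^ (2*(m+e+2))) * ∏ i ∈ Finset.range m, (1 - (q^2:RatFunc ℚ) ^ (((m+e+1:ℕ):ℤ) - (i:ℤ))) := by
        rw [Finset.prod_range_succ']
        rw [show (((m+e+2:ℕ):ℤ) - ((0:ℕ):ℤ)) = ((m+e+2 : ℕ) : ℤ) by simp,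
          zpow_eq _ (by positivity), Int.toNat_natCast, mul_comm]
        congr 1
        apply Finset.prod_congr rfl
        intro i _
        congr 2
        push_cast; ring
      have hB : (∏ i ∈ Finset.range (m+1), (1 - (q^2 : RatFunc ℚ) ^ (((m+e+1:ℕ):ℤ) - (i:ℤ))))
          = (∏ i ∈ Finset.range m, (1 - (q^2:RatFunc ℚ) ^ (((m+e+1:ℕ):ℤ) - (i:ℤ)))) * (1 - q ^ (2*(e+1))) := by
        rw [Finset.prod_range_succ]
        congr 1
        rw [show (((m+e+1:ℕ):ℤ) - ((m:ℕ):ℤ)) = ((e+1 : ℕ) : ℤ) by push_cast; ring,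
          zpow_eq _ (by positivity), Int.toNat_natCast]
      have hD : (∏ i ∈ Finset.range (m+1), (1 - (q^2 : RatFunc ℚ) ^ ((i:ℤ) + 1)))
          = (∏ i ∈ Finset.range m, (1 - (q^2:RatFunc ℚ) ^ ((i:ℤ)+1))) * (1 - q ^ (2*(m+1))) := by
        rw [Finset.prod_range_succ]
        congr 1
        rw [show ((m:ℤ) + 1) = ((m+1 : ℕ) : ℤ) by push_cast; ring,
          zpow_eq _ (by positivity), Int.toNat_natCast]
      rw [hA, hB, hD]
      have he1 : 2 * (m+1) + 2 + e - 1 - 2 * (m+1) = e + 1 := by omega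
      have he2 : 2 * (m+1) + 2 + e - 1 = 2*m + e + 3 := by omega
      rw [he1, he2]
      have hD' := denom_ne m
      have h1 : (1 : RatFunc ℚ) - q ^ (2*(m+1)) ≠ 0 := one_sub_ne _ (by omega)
      set C := ∏ i ∈ Finset.range m, (1 - (q^2:RatFunc ℚ) ^ (((m+e+1:ℕ):ℤ) - (i:ℤ))) with hC
      set D := ∏ i ∈ Finset.range m, (1 - (q^2:RatFunc ℚ) ^ ((i:ℤ)+1)) with hDdef
      field_simp
      ring
    · constructor
      · push_cast; omega
      · push_cast; omega
    · constructor
      · push_cast; omega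
      · push_cast; omega
    · constructor
      · push_cast; omega
      · push_cast; omega
  · -- boundary case: 2j = k - 1
    have hkeq : k = 2 * j + 1 := by omega
    subst hkeq
    have hn1 : ((2*j+1 : ℕ) : ℤ) - (j:ℕ) - 1 = ((j:ℕ) : ℤ) := by push_cast; ring
    have hn2 : ((2*j+1 : ℕ) : ℤ) - (j:ℕ) - 2 = ((j:ℕ) : ℤ) - 1 := by push_cast; ring
    have he0 : 2*j + 1 - 1 - 2*j = 0 := by omega
    rw [hn1, hn2, he0, qb_self_s16 j]
    obtain ⟨m, rfl⟩ : ∃ m, j = m + 1 := ⟨j - 1, by omega⟩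
    have hmid : qb (q^2) (((m+1:ℕ):ℤ) - 1) ((m+1:ℕ):ℤ) = 0 := by
      rw [qb, if_neg]
      push_cast
      omega
    have hm1 : (((m+1:ℕ):ℤ) - 1) = ((m : ℕ) : ℤ) := by push_cast; ring
    rw [hmid, hm1, qb_self_s16 m]
    simp
end
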